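/- arXiv:2603.14070 — 2 statements merged into one kernel-verified Lean document; each statement's English description precedes it below -/
import Mathlib

section
/- For joint distributions P_ij(x,y) = p_i(x)q_j(y|x) and P_i'j'(x,y) = p_{i'}(x)q_{j'}(y|x) on a finite product space, the total variation distance satisfies the lower bound d_TV(P_ij, P_i'j') ≥ max over k ∈ {i, i'} of |Σ_x p_k(x) d_TV(q_j(·|x), q_{j'}(·|x)) − d_TV(p_i, p_{i'})|. -/
/-!
Interpolate between `P_ij` and `P_i'j'` through `P_ij'` (or `P_i'j`). Changing only the kernel
moves the joint by the `p`-average of the conditional distances, changing only the marginal moves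
it by exactly `d_TV(p_i, p_i')`, and the reverse triangle inequality bounds the difference of
these two legs by the distance between the endpoints.
-/

open Finset

noncomputable section

def tvDist {ι : Type*} [Fintype ι] (μ ν : ι → ℝ) : ℝ := (1 / 2) * ∑ s, |μ s - ν s|

def jointPMF {X Y : Type*} (p : X → ℝ) (q : X → Y → ℝ) : X × Y → ℝ := fun s => p s.1 * q s.1 s.2

end

section TotalVariation

variable {ι : Type*} [Fintype ι]

theorem tvDist_comm (μ ν : ι → ℝ) : tvDist μ ν = tvDist ν μ := by
  simp only [tvDist, abs_sub_comm]

theorem tvDist_triangle (μ ν ρ : ι → ℝ) : tvDist μ ν ≤ tvDist μ ρ + tvDist ρ ν := by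
  simp only [tvDist, ← mul_add, ← sum_add_distrib]
  gcongr with s
  exact abs_sub_le _ _ _

theorem abs_tvDist_sub_tvDist_le (μ ν ρ : ι → ℝ) :
    |tvDist μ ρ - tvDist ρ ν| ≤ tvDist μ ν := by
  have h₁ := tvDist_triangle μ ρ ν
  have h₂ := tvDist_triangle ρ ν μ
  rw [tvDist_comm ν ρ] at h₁
  rw [tvDist_comm ρ μ] at h₂
  exact abs_sub_le_iff.2 ⟨by linarith, by linarith⟩

end TotalVariation

section Joint

variable {X Y : Type*} [Fintype X] [Fintype Y]

theorem tvDist_jointPMF (p p' : X → ℝ) (q q' : X → Y → ℝ) :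
    tvDist (jointPMF p q) (jointPMF p' q') = (1 / 2) * ∑ x, ∑ y, |p x * q x y - p' x * q' x y| := by
  simp only [tvDist, jointPMF, Fintype.sum_prod_type]

theorem tvDist_jointPMF_of_marginal_eq (p : X → ℝ) (q q' : X → Y → ℝ) (hp : ∀ x, 0 ≤ p x) :
    tvDist (jointPMF p q) (jointPMF p q') = ∑ x, p x * tvDist (q x) (q' x) := by
  rw [tvDist_jointPMF, mul_sum]
  refine sum_congr rfl fun x _ => ?_
  simp only [tvDist, ← mul_sub, abs_mul, abs_of_nonneg (hp x), mul_sum]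
  exact sum_congr rfl fun _ _ => by ring

theorem tvDist_jointPMF_of_kernel_eq (p p' : X → ℝ) (q : X → Y → ℝ)
    (hq0 : ∀ x y, 0 ≤ q x y) (hq1 : ∀ x, ∑ y, q x y = 1) :
    tvDist (jointPMF p q) (jointPMF p' q) = tvDist p p' := by
  rw [tvDist_jointPMF, tvDist]
  congr 1
  refine sum_congr rfl fun x _ => ?_
  simp only [← sub_mul, abs_mul, abs_of_nonneg (hq0 x _), ← mul_sum, hq1, mul_one]

end Joint

theorem general_distance_lower_bound_general
    {X Y : Type} [Fintype X] [Fintype Y]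
    (pi pi' : X → ℝ) (qj qj' : X → Y → ℝ)
    (hpi0 : ∀ x, 0 ≤ pi x)
    (hpi'0 : ∀ x, 0 ≤ pi' x)
    (hqj0 : ∀ x y, 0 ≤ qj x y) (hqj1 : ∀ x, ∑ y, qj x y = 1)
    (hqj'0 : ∀ x y, 0 ≤ qj' x y) (hqj'1 : ∀ x, ∑ y, qj' x y = 1) :
    max (abs ((∑ x, pi x * ((1/2) * ∑ y, |qj x y - qj' x y|))
            - (1/2) * ∑ x, |pi x - pi' x|))
        (abs ((∑ x, pi' x * ((1/2) * ∑ y, |qj x y - qj' x y|))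
            - (1/2) * ∑ x, |pi x - pi' x|))
      ≤ (1/2) * ∑ x, ∑ y, |pi x * qj x y - pi' x * qj' x y| := by
  rw [← tvDist_jointPMF]
  have via_kernel := abs_tvDist_sub_tvDist_le (jointPMF pi qj) (jointPMF pi' qj') (jointPMF pi qj')
  have via_marginal := abs_tvDist_sub_tvDist_le (jointPMF pi qj) (jointPMF pi' qj') (jointPMF pi' qj)
  rw [tvDist_jointPMF_of_marginal_eq pi qj qj' hpi0,
    tvDist_jointPMF_of_kernel_eq pi pi' qj' hqj'0 hqj'1] at via_kernel
  rw [tvDist_jointPMF_of_kernel_eq pi pi' qj hqj0 hqj1,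
    tvDist_jointPMF_of_marginal_eq pi' qj qj' hpi'0, abs_sub_comm] at via_marginal
  exact max_le via_kernel via_marginal

/-- General distance bound (lower): the TV distance between two joints is at least the
maximum (over the two marginals) of the absolute difference between the expected
conditional disagreement and the marginal TV distance. -/
theorem general_distance_lower_bound
    {X Y : Type} [Fintype X] [Fintype Y]
    (pi pi' : X → ℝ) (qj qj' : X → Y → ℝ)
    (hpi0 : ∀ x, 0 ≤ pi x) (hpi1 : ∑ x, pi x = 1)
    (hpi'0 : ∀ x, 0 ≤ pi' x) (hpi'1 : ∑ x, pi' x = 1)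
    (hqj0 : ∀ x y, 0 ≤ qj x y) (hqj1 : ∀ x, ∑ y, qj x y = 1)
    (hqj'0 : ∀ x y, 0 ≤ qj' x y) (hqj'1 : ∀ x, ∑ y, qj' x y = 1) :
    max (abs ((∑ x, pi x * ((1/2) * ∑ y, |qj x y - qj' x y|))
            - (1/2) * ∑ x, |pi x - pi' x|))
        (abs ((∑ x, pi' x * ((1/2) * ∑ y, |qj x y - qj' x y|))
            - (1/2) * ∑ x, |pi x - pi' x|))
      ≤ (1/2) * ∑ x, ∑ y, |pi x * qj x y - pi' x * qj' x y| :=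
  general_distance_lower_bound_general pi pi' qj qj' hpi0 hpi'0 hqj0 hqj1 hqj'0 hqj'1
end

section
/- For joint distributions P(x,y) = p(x)q(y|x) and P'(x,y) = p'(x)q'(y|x) on a finite product space, with overlap m(x) = min(p(x), p'(x)), the total variation distance satisfies d_TV(P, P') ≤ d_TV(p, p') + Σ_x m(x) · d_TV(q(·|x), q'(·|x)). In particular, if the pointwise conditional disagreement is bounded by η̄ (i.e., d_TV(q(·|x), q'(·|x)) ≤ η̄ for all x), then d_TV(P, P') ≤ d_TV(p, p') + (1 − d_TV(p, p')) · η̄. -/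
/-!
At each `x`, with `a = p x ≥ b = p' x` say, split `a q - b q' = (a - b) q + b (q - q')`:
the excess mass `|p x - p' x|` is charged in full and the overlap `min (p x) (p' x)`
only pays the conditional disagreement. The overlap has total mass `1 - d_TV(p, p')`
because `2 min(a, b) = a + b - |a - b|`.
-/

open Finset

section Overlap

variable {ι : Type*} (s : Finset ι)

theorem sum_abs_mul_sub_mul_le_of_le {a b : ℝ} {f g : ι → ℝ} (hb : 0 ≤ b) (hba : b ≤ a)
    (hf : ∀ i ∈ s, 0 ≤ f i) (hf1 : ∑ i ∈ s, f i = 1) :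
    ∑ i ∈ s, |a * f i - b * g i| ≤ (a - b) + b * ∑ i ∈ s, |f i - g i| := by
  calc ∑ i ∈ s, |a * f i - b * g i|
      = ∑ i ∈ s, |(a - b) * f i + b * (f i - g i)| :=
        sum_congr rfl fun i _ => by congr 1; ring
    _ ≤ ∑ i ∈ s, ((a - b) * f i + b * |f i - g i|) := by
        refine sum_le_sum fun i hi => (abs_add_le _ _).trans_eq ?_
        rw [abs_mul, abs_mul, abs_of_nonneg (sub_nonneg.2 hba), abs_of_nonneg hb,
          abs_of_nonneg (hf i hi)]
    _ = (a - b) + b * ∑ i ∈ s, |f i - g i| := by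
        rw [sum_add_distrib, ← mul_sum, ← mul_sum, hf1, mul_one]

theorem sum_abs_mul_sub_mul_le {a b : ℝ} {f g : ι → ℝ} (ha : 0 ≤ a) (hb : 0 ≤ b)
    (hf : ∀ i ∈ s, 0 ≤ f i) (hf1 : ∑ i ∈ s, f i = 1)
    (hg : ∀ i ∈ s, 0 ≤ g i) (hg1 : ∑ i ∈ s, g i = 1) :
    ∑ i ∈ s, |a * f i - b * g i| ≤ |a - b| + min a b * ∑ i ∈ s, |f i - g i| := by
  rcases le_total b a with hba | hab
  · rw [abs_of_nonneg (sub_nonneg.2 hba), min_eq_right hba]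
    exact sum_abs_mul_sub_mul_le_of_le s hb hba hf hf1
  · rw [abs_sub_comm, abs_of_nonneg (sub_nonneg.2 hab), min_eq_left hab]
    have h := sum_abs_mul_sub_mul_le_of_le s (g := f) ha hab hg hg1
    simp_rw [abs_sub_comm (b * g _), abs_sub_comm (g _)] at h
    exact h

theorem two_mul_sum_min (f g : ι → ℝ) :
    2 * ∑ i ∈ s, min (f i) (g i) = ∑ i ∈ s, f i + ∑ i ∈ s, g i - ∑ i ∈ s, |f i - g i| := by
  rw [mul_sum, ← sum_add_distrib, ← sum_sub_distrib]
  exact sum_congr rfl fun i _ => by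
    linarith [min_add_max (f i) (g i), max_sub_min_eq_abs' (f i) (g i)]

end Overlap

theorem sum_sum_abs_mul_sub_mul_le {X Y : Type*} [Fintype X] [Fintype Y]
    (p p' : X → ℝ) (q q' : X → Y → ℝ) (hp0 : ∀ x, 0 ≤ p x) (hp'0 : ∀ x, 0 ≤ p' x)
    (hq0 : ∀ x y, 0 ≤ q x y) (hq1 : ∀ x, ∑ y, q x y = 1)
    (hq'0 : ∀ x y, 0 ≤ q' x y) (hq'1 : ∀ x, ∑ y, q' x y = 1) :
    ∑ x, ∑ y, |p x * q x y - p' x * q' x y|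
      ≤ ∑ x, |p x - p' x| + ∑ x, min (p x) (p' x) * ∑ y, |q x y - q' x y| := by
  rw [← sum_add_distrib]
  exact sum_le_sum fun x _ => sum_abs_mul_sub_mul_le univ (hp0 x) (hp'0 x)
    (fun y _ => hq0 x y) (hq1 x) (fun y _ => hq'0 x y) (hq'1 x)

/-- Overlap (gating) bound: the joint TV distance is at most the marginal TV distance
plus the conditional disagreement averaged over the overlap mass; in particular, under
a uniform bound η̄ on pointwise conditional disagreement, it is at most
d_TV(p,p') + (1 − d_TV(p,p'))·η̄. -/
theorem overlap_gating_bound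
    {X Y : Type} [Fintype X] [Fintype Y]
    (p p' : X → ℝ) (q q' : X → Y → ℝ) (ηbar : ℝ)
    (hp0 : ∀ x, 0 ≤ p x) (hp1 : ∑ x, p x = 1)
    (hp'0 : ∀ x, 0 ≤ p' x) (hp'1 : ∑ x, p' x = 1)
    (hq0 : ∀ x y, 0 ≤ q x y) (hq1 : ∀ x, ∑ y, q x y = 1)
    (hq'0 : ∀ x y, 0 ≤ q' x y) (hq'1 : ∀ x, ∑ y, q' x y = 1) :
    ((1/2) * ∑ x, ∑ y, |p x * q x y - p' x * q' x y|
        ≤ (1/2) * ∑ x, |p x - p' x|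
          + ∑ x, min (p x) (p' x) * ((1/2) * ∑ y, |q x y - q' x y|))
    ∧ ((∀ x, (1/2) * ∑ y, |q x y - q' x y| ≤ ηbar) →
        (1/2) * ∑ x, ∑ y, |p x * q x y - p' x * q' x y|
          ≤ (1/2) * ∑ x, |p x - p' x|
            + (1 - (1/2) * ∑ x, |p x - p' x|) * ηbar) := by
  have hjoint : (1/2) * ∑ x, ∑ y, |p x * q x y - p' x * q' x y|
      ≤ (1/2) * ∑ x, |p x - p' x|
        + ∑ x, min (p x) (p' x) * ((1/2) * ∑ y, |q x y - q' x y|) := by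
    have h := sum_sum_abs_mul_sub_mul_le p p' q q' hp0 hp'0 hq0 hq1 hq'0 hq'1
    simp only [mul_left_comm _ (1/2 : ℝ), ← mul_sum]
    linarith
  refine ⟨hjoint, fun hη => ?_⟩
  have hoverlap : ∑ x, min (p x) (p' x) = 1 - (1/2) * ∑ x, |p x - p' x| := by
    linarith [two_mul_sum_min univ p p']
  have hgate : ∑ x, min (p x) (p' x) * ((1/2) * ∑ y, |q x y - q' x y|)
      ≤ (1 - (1/2) * ∑ x, |p x - p' x|) * ηbar := by
    rw [← hoverlap, sum_mul]
    exact sum_le_sum fun x _ => mul_le_mul_of_nonneg_left (hη x) (le_min (hp0 x) (hp'0 x))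
  linarith
end
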